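/- Every double circuit in a bicircular matroid has degree at most 6. -/

import Mathlib

open Set

namespace Paper

/-! ### Multigraphs, walks, cycles -/

/-- A multigraph on vertex type `V` with edge type `E`: each edge has an
unordered pair of endpoints (possibly equal, giving a loop). -/
structure Multigraph (V : Type*) (E : Type*) where
  inc : E → Sym2 V

namespace Multigraph

variable {V E : Type*}

/-- `G.IsWalk I u es vs`: starting at vertex `u` and using only edges in `I`,
the edges `es` form a walk that successively visits the vertices `vs`. -/
inductive IsWalk (G : Multigraph V E) (I : Set E) : V → List E → List V → Prop
  | nil (v : V) : IsWalk G I v [] []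
  | cons {u v : V} {e : E} {es : List E} {vs : List V} :
      e ∈ I → G.inc e = s(u, v) → IsWalk G I v es vs → IsWalk G I u (e :: es) (v :: vs)

/-- A walk from `u` to `w` inside the edge set `I`. -/
def IsWalkFrom (G : Multigraph V E) (I : Set E) (u : V) (es : List E) (vs : List V)
    (w : V) : Prop :=
  G.IsWalk I u es vs ∧ (u :: vs).getLast (by simp) = w

/-- `u` and `w` are joined by a walk using edges of `I` (same component of `G[I]`). -/
def Reachable (G : Multigraph V E) (I : Set E) (u w : V) : Prop :=
  ∃ es vs, G.IsWalkFrom I u es vs w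

/-- A cycle based at `v` using edges of `I`: a nonempty closed walk with no repeated
edges and no repeated vertices (except for the base point).  A loop is a cycle of
length `1` and a pair of parallel edges forms a cycle of length `2`. -/
def IsCycle (G : Multigraph V E) (I : Set E) (v : V) (es : List E) (vs : List V) : Prop :=
  G.IsWalkFrom I v es vs v ∧ es ≠ [] ∧ es.Nodup ∧ vs.Nodup

/-- `C` is the edge set of a cycle of the subgraph `G[I]`. -/
def IsCycleIn (G : Multigraph V E) (I : Set E) (C : Set E) : Prop :=
  ∃ v es vs, G.IsCycle I v es vs ∧ C = {e | e ∈ es}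

/-- A path from `u` to `w`: a walk with pairwise distinct vertices. -/
def IsPath (G : Multigraph V E) (I : Set E) (u : V) (es : List E) (vs : List V)
    (w : V) : Prop :=
  G.IsWalkFrom I u es vs w ∧ (u :: vs).Nodup

/-- The vertices covered by an edge set `D`; the vertex set of `G[D]`. -/
def verts (G : Multigraph V E) (D : Set E) : Set V := {v | ∃ e ∈ D, v ∈ G.inc e}

/-- The degree of `v` in the subgraph `G[D]` (loops count twice). -/
noncomputable def degree (G : Multigraph V E) (D : Set E) (v : V) : ℕ :=
  {e ∈ D | v ∈ G.inc e}.ncard + {e ∈ D | G.inc e = s(v, v)}.ncard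

/-- Every connected component of `G[I]` contains at most one cycle:
any two cycles of `G[I]` lying in the same component coincide. -/
def BicircIndep (G : Multigraph V E) (I : Set E) : Prop :=
  ∀ C₁ C₂ : Set E, G.IsCycleIn I C₁ → G.IsCycleIn I C₂ →
    (∃ u w, u ∈ G.verts C₁ ∧ w ∈ G.verts C₂ ∧ G.Reachable I u w) → C₁ = C₂

/-- `M` is the bicircular matroid `B(G)` of the multigraph `G`. -/
def IsBicircularOf (G : Multigraph V E) (M : Matroid E) : Prop :=
  M.E = univ ∧ ∀ I : Set E, M.Indep I ↔ G.BicircIndep I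

end Multigraph

/-! ### Matroid notions -/

variable {α : Type*}

/-- The (extended) rank of a set in a matroid. -/
noncomputable def eRk (M : Matroid α) (X : Set α) : ℕ∞ :=
  ⨆ I ∈ {I | M.Indep I ∧ I ⊆ X}, I.encard

/-- A circuit: a minimal dependent set. -/
def Circuit (M : Matroid α) (C : Set α) : Prop :=
  M.Dep C ∧ ∀ D ⊂ C, ¬ M.Dep D

/-- A double circuit: a finite set `D` with `r(D) = |D| - 2` whose rank does not drop
when any single element is removed. -/
def DoubleCircuit (M : Matroid α) (D : Set α) : Prop :=
  D ⊆ M.E ∧ D.Finite ∧ eRk M D + 2 = D.encard ∧ ∀ d ∈ D, eRk M (D \ {d}) = eRk M D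

/-- `f` is a circuit partition of `D`: a partition of `D` into nonempty parts such that the
circuits of `M` contained in `D` are exactly the complements in `D` of the parts. -/
def CircuitPartition (M : Matroid α) (D : Set α) {k : ℕ} (f : Fin k → Set α) : Prop :=
  (∀ i, (f i).Nonempty) ∧ (∀ i j : Fin k, i ≠ j → Disjoint (f i) (f j)) ∧
    (⋃ i, f i) = D ∧ ∀ C : Set α, (Circuit M C ∧ C ⊆ D) ↔ ∃ i, C = D \ f i

/-- A part of a partition is singular if it has exactly one element. -/
def PositiveDoubleCircuit (M : Matroid α) (D : Set α) : Prop :=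
  DoubleCircuit M D ∧ ∃ (k : ℕ) (f : Fin k → Set α), CircuitPartition M D f ∧
    {i : Fin k | (f i).encard ≠ 1}.ncard < {i : Fin k | (f i).encard = 1}.ncard

/-- A hyperplane (copoint): a maximal proper flat. -/
def Hyperplane (M : Matroid α) (H : Set α) : Prop :=
  M.IsFlat H ∧ H ≠ M.E ∧ ∀ F, M.IsFlat F → H ⊂ F → F = M.E

/-- A coline: a flat of rank `r(M) - 2`. -/
def Coline (M : Matroid α) (L : Set α) : Prop :=
  M.IsFlat L ∧ eRk M L + 2 = eRk M M.E

/-- A positive coline: more simple copoints on `L` than multiple copoints on `L`. -/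
def PositiveColine (M : Matroid α) (L : Set α) : Prop :=
  Coline M L ∧
    {H | Hyperplane M H ∧ L ⊆ H ∧ (H \ L).encard ≠ 1}.ncard <
      {H | Hyperplane M H ∧ L ⊆ H ∧ (H \ L).encard = 1}.ncard

/-- Deletion of a set of elements. -/
def delete (M : Matroid α) (D : Set α) : Matroid α := M.restrict (M.E \ D)

/-- Contraction of a set of elements. -/
def contract (M : Matroid α) (C : Set α) : Matroid α := (delete M✶ C)✶

/-- `N` is a minor of `M`. -/
def IsMinorOf (N M : Matroid α) : Prop := ∃ C D : Set α, N = delete (contract M C) D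

/-- `M` is (isomorphic to) the uniform matroid `U_{r,n}`. -/
def IsUniform (r n : ℕ) {β : Type*} (M : Matroid β) : Prop :=
  M.E.encard = n ∧ ∀ I ⊆ M.E, (M.Indep I ↔ I.encard ≤ (r : ℕ∞))

/-- A simple matroid: every set of at most two elements of the ground set is independent. -/
def IsSimple (M : Matroid α) : Prop := ∀ X ⊆ M.E, X.encard ≤ 2 → M.Indep X

/-!
Circuits of `B(G)` are connected subgraphs of minimum degree two (two cycles of one component
joined by a path), and any two circuits `C ≠ C'` of a double circuit `D` satisfy `C ∪ C' = D`.
So when `D` has at least three circuits, `G[D]` is connected with minimum degree two and the parts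
`D \ C` are pairwise disjoint. Independent sets of `B(G)` have at most as many edges as vertices,
hence `|D| ≤ |V(D)| + 2`, and by the handshake lemma the vertices of degree at least three in
`G[D]` have total degree at most `6 (|D| - |V(D)|) ≤ 12`. Each part `D \ C` meets `C` in such a
vertex, and has degree `0` or `2` at all other vertices, so by parity it contributes at least `2`
to that total. Hence there are at most six circuits.
-/

section General

lemma _root_.List.getLastD_append_cons (l₁ l₂ : List α) (a b : α) :
    (l₁ ++ b :: l₂).getLastD a = l₂.getLastD b := by
  induction l₁ generalizing a with
  | nil => rw [List.nil_append, List.getLastD_cons]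
  | cons c l₁ ih => rw [List.cons_append, List.getLastD_cons, ih]

lemma _root_.List.Nodup.length_le_ncard {l : List α} {S : Set α} (hl : l.Nodup) (hS : S.Finite)
    (h : ∀ x ∈ l, x ∈ S) : l.length ≤ S.ncard := by
  classical
  rw [← List.toFinset_card_of_nodup hl, ← Set.ncard_coe_finset]
  exact Set.ncard_le_ncard (fun x hx => h x (List.mem_toFinset.1 hx)) hS

lemma _root_.Sym2.count_toMultiset [DecidableEq α] (z : Sym2 α) (v : α) :
    z.toMultiset.count v = (if v ∈ z then 1 else 0) + (if z = s(v, v) then 1 else 0) := by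
  induction z with
  | h a b =>
    simp only [Sym2.toMultiset, Sym2.lift_mk]
    by_cases ha : a = v <;> by_cases hb : b = v <;> subst_vars <;> simp_all [eq_comm]

end General

namespace Multigraph

variable {V E : Type*} {G : Multigraph V E} {I J X Y C : Set E} {u v w x y z : V}
  {e f g : E} {es es₁ es₂ : List E} {vs vs₁ vs₂ : List V}

/-! ### Walks and paths -/

lemma isWalkFrom_iff : G.IsWalkFrom I u es vs w ↔ G.IsWalk I u es vs ∧ vs.getLastD u = w := by
  rw [IsWalkFrom, List.getLast_eq_getLastD]

lemma reachable_iff : G.Reachable I u w ↔ ∃ es vs, G.IsWalk I u es vs ∧ vs.getLastD u = w := by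
  simp only [Reachable, isWalkFrom_iff]

lemma exists_inc (G : Multigraph V E) (e : E) : ∃ a b, G.inc e = s(a, b) :=
  ⟨(Quot.out (G.inc e)).1, (Quot.out (G.inc e)).2, (Quot.out_eq _).symm⟩

namespace IsWalk

lemma length_eq (h : G.IsWalk I u es vs) : vs.length = es.length := by
  induction h with
  | nil => rfl
  | cons _ _ _ ih => simpa using ih

lemma edge_mem (h : G.IsWalk I u es vs) (he : e ∈ es) : e ∈ I := by
  induction h with
  | nil => simp at he
  | cons heI _ _ ih =>
    rcases List.mem_cons.1 he with rfl | he
    exacts [heI, ih he]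

lemma restrict (h : G.IsWalk I u es vs) (hJ : ∀ e ∈ es, e ∈ J) : G.IsWalk J u es vs := by
  induction h with
  | nil => exact .nil _
  | cons _ hinc _ ih => exact .cons (hJ _ (by simp)) hinc (ih fun e he => hJ e (by simp [he]))

lemma mono (h : G.IsWalk I u es vs) (hIJ : I ⊆ J) : G.IsWalk J u es vs :=
  h.restrict fun _ he => hIJ (h.edge_mem he)

lemma append (h : G.IsWalk I u es₁ vs₁) (h' : G.IsWalk I (vs₁.getLastD u) es₂ vs₂) :
    G.IsWalk I u (es₁ ++ es₂) (vs₁ ++ vs₂) := by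
  induction h with
  | nil => simpa using h'
  | cons he hinc _ ih => exact .cons he hinc (ih (by rwa [List.getLastD_cons] at h'))

lemma single (he : e ∈ I) (hinc : G.inc e = s(u, v)) : G.IsWalk I u [e] [v] :=
  .cons he hinc (.nil v)

lemma concat (h : G.IsWalk I u es vs) (he : e ∈ I) (hinc : G.inc e = s(vs.getLastD u, v)) :
    G.IsWalk I u (es ++ [e]) (vs ++ [v]) :=
  h.append (single he hinc)

lemma split_vertex (h : G.IsWalk I u es vs) (hvs : vs = vs₁ ++ x :: vs₂) :
    ∃ es₁ e es₂, es = es₁ ++ e :: es₂ ∧ G.IsWalk I u es₁ vs₁ ∧ e ∈ I ∧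
      G.inc e = s(vs₁.getLastD u, x) ∧ G.IsWalk I x es₂ vs₂ := by
  induction h generalizing vs₁ with
  | nil => simp at hvs
  | @cons _ _ e' es' _ he hinc hw ih =>
    cases vs₁ with
    | nil =>
      obtain ⟨rfl, rfl⟩ := List.cons.inj hvs
      exact ⟨[], e', es', rfl, .nil _, he, hinc, hw⟩
    | cons a t =>
      obtain ⟨rfl, h2⟩ := List.cons.inj hvs
      obtain ⟨es₁, e₁, es₂, rfl, hw1, he1, hinc1, hw2⟩ := ih h2
      exact ⟨e' :: es₁, e₁, es₂, rfl, .cons he hinc hw1, he1, by rwa [List.getLastD_cons], hw2⟩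

lemma split_edge (h : G.IsWalk I u es vs) (hes : es = es₁ ++ e :: es₂) :
    ∃ vs₁ b vs₂, vs = vs₁ ++ b :: vs₂ ∧ G.IsWalk I u es₁ vs₁ ∧
      G.inc e = s(vs₁.getLastD u, b) ∧ G.IsWalk I b es₂ vs₂ := by
  induction h generalizing es₁ with
  | nil => simp at hes
  | @cons _ v' _ _ vs' he hinc hw ih =>
    cases es₁ with
    | nil =>
      obtain ⟨rfl, rfl⟩ := List.cons.inj hes
      exact ⟨[], v', vs', rfl, .nil _, hinc, hw⟩
    | cons a t =>
      obtain ⟨rfl, h2⟩ := List.cons.inj hes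
      obtain ⟨vs₁, b, vs₂, rfl, hw1, hinc1, hw2⟩ := ih h2
      exact ⟨v' :: vs₁, b, vs₂, rfl, .cons he hinc hw1, by rwa [List.getLastD_cons], hw2⟩

lemma mem_of_mem_inc (h : G.IsWalk I u es vs) (he : e ∈ es) (hx : x ∈ G.inc e) :
    x ∈ u :: vs := by
  obtain ⟨es₁, es₂, rfl⟩ := List.append_of_mem he
  obtain ⟨vs₁, b, vs₂, rfl, -, hinc, -⟩ := h.split_edge rfl
  rw [hinc, Sym2.mem_iff] at hx
  rcases hx with rfl | rfl
  · exact (List.cons_sublist_cons.2 (List.sublist_append_left _ _)).subset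
      List.getLastD_mem_cons
  · simp

lemma exists_inc_of_mem (h : G.IsWalk I u es vs) (hne : es ≠ []) (hx : x ∈ u :: vs) :
    ∃ e ∈ es, x ∈ G.inc e := by
  rcases List.mem_cons.1 hx with rfl | hx
  · cases h with
    | nil => simp at hne
    | cons _ hinc _ => exact ⟨_, List.mem_cons_self, by simp [hinc]⟩
  · obtain ⟨vs₁, vs₂, rfl⟩ := List.append_of_mem hx
    obtain ⟨es₁, e, es₂, rfl, -, -, hinc, -⟩ := h.split_vertex rfl
    exact ⟨e, by simp, by simp [hinc]⟩

lemma nodup_edges (h : G.IsWalk I u es vs) (hn : (u :: vs).Nodup) : es.Nodup := by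
  induction h with
  | nil => simp
  | cons _ hinc hw ih =>
    rw [List.nodup_cons] at hn ⊢
    exact ⟨fun hmem => hn.1 (hw.mem_of_mem_inc hmem (by simp [hinc])), ih hn.2⟩

lemma exists_eq_concat (h : G.IsWalk I u es vs) (hne : es ≠ []) :
    ∃ es₁ e, es = es₁ ++ [e] ∧ vs.getLastD u ∈ G.inc e := by
  obtain ⟨es₁, e, rfl⟩ := (List.eq_nil_or_concat' es).resolve_left hne
  obtain ⟨vs₁, b, vs₂, rfl, -, hinc, hw2⟩ := h.split_edge rfl
  obtain rfl : vs₂ = [] := List.length_eq_zero_iff.1 (by simpa using hw2.length_eq)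
  exact ⟨es₁, e, rfl, by simp [hinc]⟩

lemma eq_concat_of_inc_getLastD (h : G.IsWalk I u es vs) (hn : (u :: vs).Nodup) (he : e ∈ es)
    (hw : vs.getLastD u ∈ G.inc e) : ∃ es₁, es = es₁ ++ [e] := by
  obtain ⟨es₁, es₂, rfl⟩ := List.append_of_mem he
  obtain ⟨vs₁, b, vs₂, rfl, -, hinc, hw2⟩ := h.split_edge rfl
  rw [List.getLastD_append_cons, hinc, Sym2.mem_iff] at hw
  rw [← List.cons_append, List.nodup_append] at hn
  rcases hw with hw | hw
  · exact absurd hw.symm (hn.2.2 _ List.getLastD_mem_cons _ List.getLastD_mem_cons)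
  · cases vs₂ with
    | nil => exact ⟨es₁, by simpa using hw2.length_eq.symm⟩
    | cons a t =>
      rw [List.getLastD_cons] at hw
      exact absurd (hw ▸ List.getLastD_mem_cons) (List.nodup_cons.1 hn.2.1).1

lemma exists_two_inc_of_mem (h : G.IsWalk I u es vs) (hnd : es.Nodup) (hx : x ∈ vs)
    (hxw : x ≠ vs.getLastD u) :
    ∃ e₁ ∈ es, ∃ e₂ ∈ es, e₁ ≠ e₂ ∧ x ∈ G.inc e₁ ∧ x ∈ G.inc e₂ := by
  obtain ⟨vs₁, vs₂, rfl⟩ := List.append_of_mem hx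
  obtain ⟨es₁, e₁, es₂, rfl, -, -, hinc1, hw2⟩ := h.split_vertex rfl
  rw [List.getLastD_append_cons] at hxw
  cases hw2 with
  | nil => exact absurd rfl hxw
  | @cons _ _ e₂ _ _ _ hinc2 _ =>
    replace hnd := (List.nodup_append.1 hnd).2.1
    refine ⟨e₁, by simp, e₂, by simp, fun heq => ?_, by simp [hinc1], by simp [hinc2]⟩
    exact (List.nodup_cons.1 hnd).1 (heq ▸ List.mem_cons_self)

lemma exists_isSuffix (h : G.IsWalk I u es vs) (hx : x ∈ u :: vs) :
    ∃ es' vs', G.IsWalk I x es' vs' ∧ es' <:+ es ∧ x :: vs' <:+ u :: vs ∧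
      vs'.getLastD x = vs.getLastD u := by
  rcases List.mem_cons.1 hx with rfl | hx
  · exact ⟨es, vs, h, List.suffix_refl _, List.suffix_refl _, rfl⟩
  obtain ⟨vs₁, vs₂, rfl⟩ := List.append_of_mem hx
  obtain ⟨es₁, e, es₂, rfl, -, -, -, hw⟩ := h.split_vertex rfl
  exact ⟨es₂, vs₂, hw, (List.suffix_cons _ _).trans (List.suffix_append _ _),
    (List.suffix_append _ _).trans (List.suffix_cons _ _),
    (List.getLastD_append_cons _ _ _ _).symm⟩

lemma exists_path (h : G.IsWalk I u es vs) :
    ∃ es' vs', G.IsWalk I u es' vs' ∧ vs'.getLastD u = vs.getLastD u ∧ (u :: vs').Nodup := by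
  induction h with
  | nil => exact ⟨[], [], .nil _, rfl, by simp⟩
  | @cons u' v' e' _ _ he hinc _ ih =>
    obtain ⟨es'', vs'', hw'', hend, hnd⟩ := ih
    rw [List.getLastD_cons, ← hend]
    by_cases hu : u' ∈ v' :: vs''
    · obtain ⟨es₂, vs₂, hw₂, -, hsuf, hl⟩ := hw''.exists_isSuffix hu
      exact ⟨es₂, vs₂, hw₂, hl, hnd.sublist hsuf.sublist⟩
    · exact ⟨e' :: es'', v' :: vs'', .cons he hinc hw'', List.getLastD_cons,
        List.nodup_cons.2 ⟨hu, hnd⟩⟩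

end IsWalk

/-! ### Connectivity and degrees -/

namespace Reachable

@[refl] lemma refl (u : V) : G.Reachable I u u := ⟨[], [], .nil u, rfl⟩

lemma trans (h₁ : G.Reachable I u v) (h₂ : G.Reachable I v w) : G.Reachable I u w := by
  obtain ⟨es₁, vs₁, hw₁, rfl⟩ := reachable_iff.1 h₁
  obtain ⟨es₂, vs₂, hw₂, rfl⟩ := reachable_iff.1 h₂
  refine reachable_iff.2 ⟨_, _, hw₁.append hw₂, ?_⟩
  cases vs₂ using List.reverseRecOn with
  | nil => simp
  | append_singleton l a => simp [← List.append_assoc]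

lemma mono (h : G.Reachable I u w) (hIJ : I ⊆ J) : G.Reachable J u w :=
  let ⟨es, vs, hw, hl⟩ := h
  ⟨es, vs, hw.mono hIJ, hl⟩

end Reachable

lemma IsWalk.reachable (h : G.IsWalk I u es vs) : G.Reachable I u (vs.getLastD u) :=
  reachable_iff.2 ⟨es, vs, h, rfl⟩

lemma reachable_of_inc (he : e ∈ I) (hinc : G.inc e = s(u, v)) : G.Reachable I u v :=
  (IsWalk.single he hinc).reachable

lemma reachable_of_mem_inc (he : e ∈ I) (hx : x ∈ G.inc e) (hy : y ∈ G.inc e) :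
    G.Reachable I x y := by
  obtain ⟨b, hb⟩ := Sym2.mem_iff_exists.1 hx
  rw [hb, Sym2.mem_iff] at hy
  rcases hy with rfl | rfl
  exacts [.refl _, reachable_of_inc he hb]

lemma Reachable.symm (h : G.Reachable I u w) : G.Reachable I w u := by
  obtain ⟨es, vs, hw, rfl⟩ := reachable_iff.1 h
  clear h
  induction hw with
  | nil => rfl
  | cons he hinc _ ih =>
    rw [List.getLastD_cons]
    exact ih.trans (reachable_of_inc he (by rw [hinc, Sym2.eq_swap]))

lemma IsWalk.reachable_of_mem (h : G.IsWalk I u es vs) (hx : x ∈ u :: vs) :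
    G.Reachable I u x := by
  induction h with
  | nil => rw [List.mem_singleton.1 hx]
  | cons he hinc _ ih =>
    rcases List.mem_cons.1 hx with rfl | hx
    exacts [.refl _, (reachable_of_inc he hinc).trans (ih hx)]

lemma mem_verts (he : e ∈ X) (hx : x ∈ G.inc e) : x ∈ G.verts X := ⟨e, he, hx⟩

lemma verts_mono (h : X ⊆ Y) : G.verts X ⊆ G.verts Y :=
  fun _ ⟨e, he, hx⟩ => ⟨e, h he, hx⟩

lemma verts_union (X Y : Set E) : G.verts (X ∪ Y) = G.verts X ∪ G.verts Y := by
  ext x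
  simp [verts, or_and_right, exists_or]

lemma verts_nonempty (hX : X.Nonempty) : (G.verts X).Nonempty := by
  obtain ⟨e, he⟩ := hX
  obtain ⟨a, b, hab⟩ := G.exists_inc e
  exact ⟨a, e, he, by simp [hab]⟩

lemma verts_finite (hX : X.Finite) : (G.verts X).Finite := by
  classical
  refine (hX.biUnion fun e _ => (G.inc e).toMultiset.toFinset.finite_toSet).subset ?_
  rintro x ⟨e, he, hx⟩
  exact mem_biUnion he (by simpa using hx)

def Preconnected (G : Multigraph V E) (X : Set E) : Prop :=
  ∀ u ∈ G.verts X, ∀ w ∈ G.verts X, G.Reachable X u w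

lemma Preconnected.of_reachable (h : ∀ v ∈ G.verts X, G.Reachable X u v) : G.Preconnected X :=
  fun v hv w hw => (h v hv).symm.trans (h w hw)

lemma Preconnected.union (hX : G.Preconnected X) (hY : G.Preconnected Y) (hXY : (X ∩ Y).Nonempty) :
    G.Preconnected (X ∪ Y) := by
  obtain ⟨e, heX, heY⟩ := hXY
  obtain ⟨a, b, hab⟩ := G.exists_inc e
  have ha : a ∈ G.inc e := by simp [hab]
  refine .of_reachable (u := a) fun v hv => ?_
  rcases verts_union X Y ▸ hv with hv | hv
  · exact (hX a (mem_verts heX ha) v hv).mono subset_union_left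
  · exact (hY a (mem_verts heY ha) v hv).mono subset_union_right

lemma IsWalk.exists_mem_verts_inter (h : G.IsWalk (X ∪ Y) u es vs) (hu : u ∈ G.verts X)
    (hw : vs.getLastD u ∈ G.verts Y) : ∃ x, x ∈ G.verts X ∧ x ∈ G.verts Y := by
  induction h with
  | nil => exact ⟨_, hu, hw⟩
  | cons he hinc _ ih =>
    rw [List.getLastD_cons] at hw
    rcases he with he | he
    · exact ih ⟨_, he, by simp [hinc]⟩ hw
    · exact ⟨_, hu, ⟨_, he, by simp [hinc]⟩⟩

lemma Preconnected.exists_mem_verts_inter (h : G.Preconnected (X ∪ Y)) (hX : X.Nonempty)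
    (hY : Y.Nonempty) : ∃ x, x ∈ G.verts X ∧ x ∈ G.verts Y := by
  obtain ⟨a, ha⟩ := verts_nonempty hX
  obtain ⟨b, hb⟩ := verts_nonempty hY
  obtain ⟨es, vs, hw, rfl⟩ :=
    reachable_iff.1 (h a (verts_mono subset_union_left ha) b (verts_mono subset_union_right hb))
  exact hw.exists_mem_verts_inter ha hb

lemma degree_eq_sum [DecidableEq V] (hX : X.Finite) (v : V) :
    G.degree X v = ∑ e ∈ hX.toFinset, (G.inc e).toMultiset.count v := by
  have hsep : ∀ (p : E → Prop) [DecidablePred p],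
      {e ∈ X | p e}.ncard = ∑ e ∈ hX.toFinset, if p e then 1 else 0 := by
    intro p _
    rw [← Finset.card_filter, ← Set.ncard_coe_finset]
    congr
    ext
    simp
  simp only [degree, hsep, Sym2.count_toMultiset, Finset.sum_add_distrib]

lemma sum_degree_eq_two_mul_ncard [DecidableEq V] {S : Finset V} (hX : X.Finite)
    (hS : G.verts X ⊆ S) : ∑ v ∈ S, G.degree X v = 2 * X.ncard := by
  simp_rw [degree_eq_sum hX]
  rw [Finset.sum_comm, Finset.sum_congr rfl fun e he => Multiset.sum_count_eq_card fun v hv =>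
    hS (mem_verts (hX.mem_toFinset.1 he) (Sym2.mem_toMultiset.1 hv))]
  simp [Sym2.card_toMultiset, Set.ncard_eq_toFinset_card _ hX, mul_comm]

lemma degree_union (hX : X.Finite) (hY : Y.Finite) (hXY : Disjoint X Y) (v : V) :
    G.degree (X ∪ Y) v = G.degree X v + G.degree Y v := by
  classical
  rw [degree_eq_sum (hX.union hY), degree_eq_sum hX, degree_eq_sum hY,
    Set.Finite.toFinset_union, Finset.sum_union (Set.Finite.disjoint_toFinset.2 hXY)]

lemma degree_mono (hY : Y.Finite) (h : X ⊆ Y) (v : V) : G.degree X v ≤ G.degree Y v :=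
  add_le_add (Set.ncard_le_ncard (fun _ he => ⟨h he.1, he.2⟩) (hY.subset (sep_subset _ _)))
    (Set.ncard_le_ncard (fun _ he => ⟨h he.1, he.2⟩) (hY.subset (sep_subset _ _)))

lemma degree_pos_iff (hX : X.Finite) : 0 < G.degree X v ↔ v ∈ G.verts X := by
  classical
  simp [degree_eq_sum hX, Finset.sum_pos_iff, verts, Multiset.count_pos]

lemma two_le_degree_of_loop (hX : X.Finite) (he : e ∈ X) (hinc : G.inc e = s(v, v)) :
    2 ≤ G.degree X v := by
  classical
  rw [degree_eq_sum hX]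
  refine le_trans ?_ (Finset.single_le_sum (fun _ _ => Nat.zero_le _) (hX.mem_toFinset.2 he))
  simp [hinc, Sym2.count_toMultiset]

lemma two_le_degree_of_ne (hX : X.Finite) (he : e ∈ X) (hf : f ∈ X) (hef : e ≠ f)
    (hve : v ∈ G.inc e) (hvf : v ∈ G.inc f) : 2 ≤ G.degree X v := by
  have hsub : {e, f} ⊆ {e ∈ X | v ∈ G.inc e} := by
    rintro g (rfl | rfl) <;> exact ⟨‹_›, ‹_›⟩
  have := Set.ncard_le_ncard hsub (hX.subset (sep_subset _ _))
  rw [Set.ncard_pair hef] at this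
  exact this.trans (Nat.le_add_right _ _)

def MinDegreeGeTwo (G : Multigraph V E) (X : Set E) : Prop :=
  ∀ v ∈ G.verts X, 2 ≤ G.degree X v

lemma MinDegreeGeTwo.union (hX : G.MinDegreeGeTwo X) (hY : G.MinDegreeGeTwo Y)
    (hXY : (X ∪ Y).Finite) : G.MinDegreeGeTwo (X ∪ Y) := by
  intro v hv
  rcases (verts_union X Y ▸ hv : v ∈ G.verts X ∪ G.verts Y) with hv | hv
  · exact (hX v hv).trans (degree_mono hXY subset_union_left v)
  · exact (hY v hv).trans (degree_mono hXY subset_union_right v)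

/-! ### Cycles -/

namespace IsCycleIn

lemma subset (h : G.IsCycleIn I C) : C ⊆ I := by
  obtain ⟨v, es, vs, ⟨⟨hw, -⟩, -⟩, rfl⟩ := h
  exact fun _ he => hw.edge_mem he

lemma mono (h : G.IsCycleIn I C) (hIJ : I ⊆ J) : G.IsCycleIn J C := by
  obtain ⟨v, es, vs, ⟨⟨hw, hl⟩, hc⟩, rfl⟩ := h
  exact ⟨v, es, vs, ⟨⟨hw.mono hIJ, hl⟩, hc⟩, rfl⟩

lemma self (h : G.IsCycleIn I C) : G.IsCycleIn C C := by
  obtain ⟨v, es, vs, ⟨⟨hw, hl⟩, hc⟩, rfl⟩ := h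
  exact ⟨v, es, vs, ⟨⟨hw.restrict fun _ he => he, hl⟩, hc⟩, rfl⟩

lemma finite (h : G.IsCycleIn I C) : C.Finite := by
  obtain ⟨v, es, vs, -, rfl⟩ := h
  exact List.finite_toSet es

lemma nonempty (h : G.IsCycleIn I C) : C.Nonempty := by
  obtain ⟨v, es, vs, ⟨-, hne, -⟩, rfl⟩ := h
  exact ⟨_, List.head_mem hne⟩

lemma preconnected (h : G.IsCycleIn I C) : G.Preconnected C := by
  obtain ⟨v, es, vs, ⟨⟨hw, hl⟩, -⟩, rfl⟩ := h
  have hw' : G.IsWalk {e | e ∈ es} v es vs := hw.restrict fun _ he => he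
  exact .of_reachable fun x ⟨_, he, hx⟩ => hw'.reachable_of_mem (hw.mem_of_mem_inc he hx)

lemma minDegreeGeTwo (h : G.IsCycleIn I C) : G.MinDegreeGeTwo C := by
  have hC := h.finite
  obtain ⟨v, es, vs, ⟨hw, hne, hnd, -⟩, rfl⟩ := h
  rw [isWalkFrom_iff] at hw
  obtain ⟨hw, hl⟩ := hw
  rintro x ⟨f, hf, hxf⟩
  by_cases hxv : x = v
  -- the base vertex lies on the first and the last edge, which differ unless the cycle is a single loop
  · subst hxv
    cases hw with
    | nil => simp at hne
    | @cons _ b₀ e₀ es' vs' he₀ hinc₀ hw' =>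
      rw [List.getLastD_cons] at hl
      rcases eq_or_ne es' [] with rfl | hes'
      · obtain rfl : vs' = [] := List.length_eq_zero_iff.1 (by simpa using hw'.length_eq)
        exact two_le_degree_of_loop hC (e := e₀) (by simp) (by simpa [← hl] using hinc₀)
      · obtain ⟨es₁, e, rfl, hxe⟩ := hw'.exists_eq_concat hes'
        refine two_le_degree_of_ne hC (e := e₀) (f := e) (by simp) (by simp) ?_
          (by simp [hinc₀]) (hl ▸ hxe)
        rintro rfl
        simp at hnd
  · have hxvs : x ∈ vs := (List.mem_cons.1 (hw.mem_of_mem_inc hf hxf)).resolve_left hxv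
    obtain ⟨e₁, he₁, e₂, he₂, hne₁₂, hx₁, hx₂⟩ :=
      hw.exists_two_inc_of_mem hnd hxvs (by rwa [hl])
    exact two_le_degree_of_ne hC he₁ he₂ hne₁₂ hx₁ hx₂

end IsCycleIn

lemma isCycleIn_singleton (he : e ∈ I) (hinc : G.inc e = s(x, x)) : G.IsCycleIn I {e} :=
  ⟨x, [e], [x], ⟨isWalkFrom_iff.2 ⟨.single he hinc, rfl⟩, by simp, by simp, by simp⟩,
    by ext; simp⟩

lemma BicircIndep.subset (h : G.BicircIndep I) (hJI : J ⊆ I) : G.BicircIndep J :=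
  fun C₁ C₂ h₁ h₂ ⟨u, w, hu, hw, hr⟩ =>
    h C₁ C₂ (h₁.mono hJI) (h₂.mono hJI) ⟨u, w, hu, hw, hr.mono hJI⟩

lemma IsWalk.exists_isCycleIn (h : G.IsWalk I u es vs) (hn : (u :: vs).Nodup) (hg : g ∈ I)
    (hges : g ∉ es) (hinc : G.inc g = s(vs.getLastD u, z)) (hz : z ∈ u :: vs) :
    ∃ C, G.IsCycleIn I C := by
  obtain ⟨es', vs', hw, hes, hvs, hl⟩ := h.exists_isSuffix hz
  have hn' := hn.sublist hvs.sublist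
  refine ⟨_, z, es' ++ [g], vs' ++ [z], ⟨isWalkFrom_iff.2 ⟨hw.concat hg (hl ▸ hinc), by simp⟩,
    by simp, ?_, List.nodup_append_comm.2 hn'⟩, rfl⟩
  exact List.nodup_append_comm.2 (List.nodup_cons.2
    ⟨fun h => hges (hes.subset h), hw.nodup_edges hn'⟩)

lemma IsWalk.exists_isCycleIn_or_extend (hpend : ∀ f ∈ X, ∀ x ∈ G.inc f, x ∈ G.verts (X \ {f}))
    (h : G.IsWalk X u es vs) (hn : (u :: vs).Nodup) (hne : es ≠ []) :
    (∃ C, G.IsCycleIn X C) ∨ ∃ g z, g ∈ X ∧ G.inc g = s(vs.getLastD u, z) ∧ z ∉ u :: vs := by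
  obtain ⟨es₁, f, rfl, hf⟩ := h.exists_eq_concat hne
  obtain ⟨g, ⟨hgX, hgf⟩, hg⟩ := hpend f (h.edge_mem (by simp)) _ hf
  obtain ⟨z, hz⟩ := Sym2.mem_iff_exists.1 hg
  have hges : g ∉ es₁ ++ [f] := fun hmem => by
    obtain ⟨es₂, hes⟩ := h.eq_concat_of_inc_getLastD hn hmem hg
    exact hgf (List.append_inj_right' hes.symm (by rfl) |> List.singleton_inj.1)
  by_cases hzu : z ∈ u :: vs
  exacts [.inl (h.exists_isCycleIn hn hgX hges hz hzu), .inr ⟨g, z, hgX, hz, hzu⟩]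

/-- Extend the path until its last edge leads back into it; a path cannot outgrow `V(X)`. -/
lemma IsWalk.exists_isCycleIn_of_forall_mem_verts_sdiff
    (hpend : ∀ f ∈ X, ∀ x ∈ G.inc f, x ∈ G.verts (X \ {f}))
    (hX : X.Finite) {u : V} {es : List E} {vs : List V} (h : G.IsWalk X u es vs)
    (hn : (u :: vs).Nodup) (hne : es ≠ []) : ∃ C, G.IsCycleIn X C := by
  obtain hC | ⟨g, z, hg, hinc, hz⟩ := h.exists_isCycleIn_or_extend hpend hn hne
  · exact hC
  have hw := h.concat hg hinc
  have hn' : (u :: (vs ++ [z])).Nodup := by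
    rw [← List.cons_append]
    exact List.nodup_append_comm.2 (List.nodup_cons.2 ⟨hz, hn⟩)
  have hlen := hn'.length_le_ncard (verts_finite hX) fun x hx =>
    let ⟨e, he, hxe⟩ := hw.exists_inc_of_mem (by simp) hx
    mem_verts (hw.edge_mem he) hxe
  exact hw.exists_isCycleIn_of_forall_mem_verts_sdiff hpend hX hn' (by simp)
termination_by (G.verts X).ncard - vs.length
decreasing_by simp at hlen ⊢; omega

lemma exists_isCycleIn_of_forall_mem_verts_sdiff
    (hpend : ∀ f ∈ X, ∀ x ∈ G.inc f, x ∈ G.verts (X \ {f}))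
    (hX : X.Finite) (hne : X.Nonempty) : ∃ C, G.IsCycleIn X C := by
  obtain ⟨e, he⟩ := hne
  obtain ⟨a, b, hab⟩ := G.exists_inc e
  by_cases hba : b = a
  · exact ⟨_, isCycleIn_singleton he (hba ▸ hab)⟩
  · exact (IsWalk.single he hab).exists_isCycleIn_of_forall_mem_verts_sdiff hpend hX
      (by simp [Ne.symm hba]) (by simp)

/-! ### Independent and dependent sets -/

lemma ncard_verts_sdiff_singleton_lt (hX : X.Finite) (hf : f ∈ X) (hx : x ∈ G.inc f)
    (hxf : x ∉ G.verts (X \ {f})) :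
    (G.verts (X \ {f})).ncard < (G.verts X).ncard :=
  Set.ncard_lt_ncard ⟨verts_mono sdiff_subset, fun h => hxf (h (mem_verts hf hx))⟩
    (verts_finite hX)

/-- A path through `f` would pass through its end `x`, which lies on no other edge. -/
lemma Preconnected.sdiff_singleton (h : G.Preconnected X) (hx : x ∈ G.inc f)
    (hxf : x ∉ G.verts (X \ {f})) : G.Preconnected (X \ {f}) := by
  intro u hu w hw
  obtain ⟨es, vs, hwk, hl⟩ :=
    reachable_iff.1 (h u (verts_mono sdiff_subset hu) w (verts_mono sdiff_subset hw))
  obtain ⟨es, vs, hwk, hend, hn⟩ := hwk.exists_path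
  refine reachable_iff.2 ⟨es, vs, hwk.restrict fun e he => ⟨hwk.edge_mem he, ?_⟩, hend.trans hl⟩
  intro hef
  have hfes : f ∈ es := mem_singleton_iff.1 hef ▸ he
  have hxu : x ≠ u := fun h => hxf (h ▸ hu)
  have hxvs : x ∈ vs := (List.mem_cons.1 (hwk.mem_of_mem_inc hfes hx)).resolve_left hxu
  obtain ⟨e₁, he₁, e₂, he₂, hne, hx₁, hx₂⟩ :=
    hwk.exists_two_inc_of_mem (hwk.nodup_edges hn) hxvs (by rw [hend, hl]; rintro rfl; exact hxf hw)
  obtain ⟨g, hg, hgf, hxg⟩ : ∃ g ∈ es, g ≠ f ∧ x ∈ G.inc g := by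
    by_cases h₁ : e₁ = f
    exacts [⟨e₂, he₂, h₁ ▸ hne.symm, hx₂⟩, ⟨e₁, he₁, h₁, hx₁⟩]
  exact hxf (mem_verts ⟨hwk.edge_mem hg, hgf⟩ hxg)

lemma exists_isCycleIn_of_ncard_verts_le {X : Set E} (hX : X.Finite) (hne : X.Nonempty)
    (hcard : (G.verts X).ncard ≤ X.ncard) : ∃ C, G.IsCycleIn X C := by
  by_cases hpend : ∀ f ∈ X, ∀ x ∈ G.inc f, x ∈ G.verts (X \ {f})
  · exact exists_isCycleIn_of_forall_mem_verts_sdiff hpend hX hne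
  push Not at hpend
  obtain ⟨f, hf, x, hx, hxf⟩ := hpend
  have hlt := ncard_verts_sdiff_singleton_lt hX hf hx hxf
  rcases (X \ {f}).eq_empty_or_nonempty with h | h
  · obtain rfl : X = {f} := (sdiff_eq_empty.1 h).antisymm (singleton_subset_iff.2 hf)
    obtain ⟨a, b, hab⟩ := G.exists_inc f
    obtain rfl : a = b := by
      by_contra hab'
      have hsub : {a, b} ⊆ G.verts {f} := by
        rintro y (rfl | rfl) <;> exact mem_verts (mem_singleton f) (by rw [hab]; simp)
      have := Set.ncard_le_ncard hsub (verts_finite hX)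
      rw [Set.ncard_pair hab'] at this
      rw [ncard_singleton] at hcard
      omega
    exact ⟨_, isCycleIn_singleton rfl hab⟩
  · have hlt' : (X \ {f}).ncard < X.ncard := Set.ncard_sdiff_singleton_lt_of_mem hf hX
    obtain ⟨C, hC⟩ := exists_isCycleIn_of_ncard_verts_le hX.sdiff h
      (by rw [Set.ncard_sdiff_singleton_of_mem hf]; omega)
    exact ⟨C, hC.mono sdiff_subset⟩
termination_by X.ncard

lemma not_bicircIndep_of_ncard_verts_lt {X : Set E} (hX : X.Finite) (hconn : G.Preconnected X)
    (hcard : (G.verts X).ncard < X.ncard) : ¬ G.BicircIndep X := by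
  have hne : X.Nonempty := Set.nonempty_of_ncard_ne_zero (by omega)
  by_cases hpend : ∀ f ∈ X, ∀ x ∈ G.inc f, x ∈ G.verts (X \ {f})
  · obtain ⟨C₁, hC₁⟩ := exists_isCycleIn_of_forall_mem_verts_sdiff hpend hX hne
    have hV : 0 < (G.verts X).ncard := (Set.ncard_pos (verts_finite hX)).2 (verts_nonempty hne)
    obtain ⟨f, hf⟩ := hC₁.nonempty
    have hfX := hC₁.subset hf
    have hverts : G.verts (X \ {f}) = G.verts X := by
      refine (verts_mono sdiff_subset).antisymm ?_
      rintro x ⟨e, he, hx⟩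
      by_cases hef : e = f
      · exact hef ▸ hpend e he x hx
      · exact mem_verts ⟨he, hef⟩ hx
    obtain ⟨C₂, hC₂⟩ := exists_isCycleIn_of_ncard_verts_le hX.sdiff
      (Set.nonempty_of_ncard_ne_zero (by rw [Set.ncard_sdiff_singleton_of_mem hfX]; omega))
      (by rw [hverts, Set.ncard_sdiff_singleton_of_mem hfX]; omega)
    intro hind
    obtain ⟨u, hu⟩ := verts_nonempty (G := G) hC₁.nonempty
    obtain ⟨w, hw⟩ := verts_nonempty (G := G) hC₂.nonempty
    have := hind C₁ C₂ hC₁ (hC₂.mono sdiff_subset) ⟨u, w, hu, hw, hconn u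
      (verts_mono hC₁.subset hu) w (verts_mono (hC₂.subset.trans sdiff_subset) hw)⟩
    exact (hC₂.subset (this ▸ hf)).2 rfl
  push Not at hpend
  obtain ⟨f, hf, x, hx, hxf⟩ := hpend
  have hlt := ncard_verts_sdiff_singleton_lt hX hf hx hxf
  have hlt' : (X \ {f}).ncard < X.ncard := Set.ncard_sdiff_singleton_lt_of_mem hf hX
  exact fun hind => not_bicircIndep_of_ncard_verts_lt hX.sdiff (hconn.sdiff_singleton hx hxf)
    (by rw [Set.ncard_sdiff_singleton_of_mem hf]; omega) (hind.subset sdiff_subset)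
termination_by X.ncard

lemma IsWalk.isWalk_component {a : V} (h : G.IsWalk X u es vs) (hu : G.Reachable X a u) :
    G.IsWalk {f ∈ X | ∃ y ∈ G.inc f, G.Reachable X a y} u es vs := by
  induction h with
  | nil => exact .nil _
  | cons he hinc _ ih =>
    exact .cons ⟨he, _, by simp [hinc], hu⟩ hinc (ih (hu.trans (reachable_of_inc he hinc)))

/-- Split off the component `K` of an edge: it is connected, so it has at most as many edges
as vertices. -/
lemma BicircIndep.ncard_le_ncard_verts {X : Set E} (h : G.BicircIndep X) (hX : X.Finite) :
    X.ncard ≤ (G.verts X).ncard := by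
  rcases X.eq_empty_or_nonempty with rfl | ⟨e, he⟩
  · simp
  obtain ⟨a, b, hab⟩ := G.exists_inc e
  set K := {f ∈ X | ∃ y ∈ G.inc f, G.Reachable X a y}
  have hKX : K ⊆ X := sep_subset _ _
  have hK : 0 < K.ncard := (Set.ncard_pos (hX.subset hKX)).2 ⟨e, he, a, by simp [hab], .refl a⟩
  have hreach (y) (hy : y ∈ G.verts K) : G.Reachable K a y := by
    obtain ⟨f, ⟨hfX, z, hz, hrz⟩, hyf⟩ := hy
    obtain ⟨es, vs, hw, rfl⟩ := reachable_iff.1 (hrz.trans (reachable_of_mem_inc hfX hz hyf))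
    exact (hw.isWalk_component (.refl a)).reachable
  have hKcard : K.ncard ≤ (G.verts K).ncard := not_lt.1 fun hlt =>
    not_bicircIndep_of_ncard_verts_lt (hX.subset hKX)
      (.of_reachable hreach) hlt (h.subset hKX)
  have hdisj : Disjoint (G.verts K) (G.verts (X \ K)) := by
    rw [Set.disjoint_left]
    rintro y hy ⟨f, ⟨hfX, hfK⟩, hyf⟩
    exact hfK ⟨hfX, y, hyf, (hreach y hy).mono hKX⟩
  have hsplit := ncard_sdiff_add_ncard_of_subset hKX hX
  have hrest := ncard_le_ncard_verts (X := X \ K) (h.subset sdiff_subset) hX.sdiff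
  calc X.ncard = K.ncard + (X \ K).ncard := by omega
    _ ≤ (G.verts K).ncard + (G.verts (X \ K)).ncard := add_le_add hKcard hrest
    _ = (G.verts X).ncard := by
      rw [← ncard_union_eq hdisj (verts_finite (hX.subset hKX)) (verts_finite hX.sdiff),
        ← verts_union, union_sdiff_cancel hKX]
termination_by X.ncard
decreasing_by change (X \ K).ncard < X.ncard; omega

/-- The witness is made of two cycles in one component and a path joining them. -/
lemma exists_preconnected_minDegreeGeTwo_of_not_bicircIndep (h : ¬ G.BicircIndep X) :
    ∃ Y ⊆ X, Y.Finite ∧ ¬ G.BicircIndep Y ∧ G.Preconnected Y ∧ G.MinDegreeGeTwo Y := by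
  simp only [BicircIndep, not_forall] at h
  obtain ⟨C₁, C₂, hC₁, hC₂, ⟨u, w, hu, hw, hr⟩, hne⟩ := h
  obtain ⟨es, vs, hwk, rfl⟩ := reachable_iff.1 hr
  obtain ⟨es, vs, hwk, hl, hn⟩ := hwk.exists_path
  set Y := C₁ ∪ C₂ ∪ {e | e ∈ es}
  have hY : Y.Finite := (hC₁.finite.union hC₂.finite).union (List.finite_toSet es)
  have hC₁Y : C₁ ⊆ Y := subset_union_left.trans subset_union_left
  have hC₂Y : C₂ ⊆ Y := subset_union_right.trans subset_union_left
  have hwY : G.IsWalk Y u es vs := hwk.restrict fun e he => Or.inr he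
  have hreach : G.Reachable Y u (vs.getLastD u) := hwY.reachable
  refine ⟨Y, union_subset (union_subset hC₁.subset hC₂.subset) fun e he => hwk.edge_mem he, hY,
    fun hind => hne (hind C₁ C₂ (hC₁.self.mono hC₁Y) (hC₂.self.mono hC₂Y)
      ⟨u, _, hu, hl ▸ hw, hreach⟩), .of_reachable (u := u) fun x hx => ?_, fun x hx => ?_⟩
  · rcases verts_union _ _ ▸ verts_union _ _ ▸ hx with (hx | hx) | ⟨e, he, hxe⟩
    · exact (hC₁.self.preconnected u hu x hx).mono hC₁Y
    · exact hreach.trans ((hC₂.self.preconnected _ (hl ▸ hw) x hx).mono hC₂Y)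
    · exact hwY.reachable_of_mem (hwk.mem_of_mem_inc he hxe)
  · by_cases hx₁ : x ∈ G.verts C₁
    · exact (hC₁.minDegreeGeTwo x hx₁).trans (degree_mono hY hC₁Y x)
    by_cases hx₂ : x ∈ G.verts C₂
    · exact (hC₂.minDegreeGeTwo x hx₂).trans (degree_mono hY hC₂Y x)
    obtain ⟨e, he, hxe⟩ : x ∈ G.verts {e | e ∈ es} := by
      rcases verts_union _ _ ▸ verts_union _ _ ▸ hx with (h | h) | h
      exacts [absurd h hx₁, absurd h hx₂, h]
    have hxvs : x ∈ vs :=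
      (List.mem_cons.1 (hwk.mem_of_mem_inc he hxe)).resolve_left fun h => hx₁ (h ▸ hu)
    obtain ⟨e₁, he₁, e₂, he₂, hne, hx₁, hx₂⟩ := hwk.exists_two_inc_of_mem (hwk.nodup_edges hn)
      hxvs fun h => hx₂ (h ▸ hl ▸ hw)
    exact two_le_degree_of_ne hY (Or.inr he₁) (Or.inr he₂) hne hx₁ hx₂

/-! ### Degree counting -/

section Counting

variable [DecidableEq V] {D : Set E} {S : Finset V}

lemma sum_degree_filter_add_le (hD : D.Finite) (hS : ∀ v, v ∈ S ↔ v ∈ G.verts D)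
    (hdeg : G.MinDegreeGeTwo D) :
    ∑ v ∈ S with 3 ≤ G.degree D v, G.degree D v + 6 * S.card ≤ 6 * D.ncard := by
  have hsum := sum_degree_eq_two_mul_ncard hD fun v hv => (hS v).2 hv
  rw [← Finset.sum_filter_add_sum_filter_not S (3 ≤ G.degree D ·)] at hsum
  have hrest : ∑ v ∈ S with ¬ 3 ≤ G.degree D v, G.degree D v =
      ({v ∈ S | ¬ 3 ≤ G.degree D v} : Finset V).card * 2 := by
    refine Finset.sum_const_nat fun v hv => ?_
    obtain ⟨hvS, hv3⟩ := Finset.mem_filter.1 hv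
    have := hdeg v ((hS v).1 hvS)
    omega
  have hbig : ({v ∈ S | 3 ≤ G.degree D v} : Finset V).card * 3 ≤
      ∑ v ∈ S with 3 ≤ G.degree D v, G.degree D v :=
    Finset.card_nsmul_le_sum _ _ 3 fun v hv => (Finset.mem_filter.1 hv).2
  have hcard := Finset.card_filter_add_card_filter_not (s := S) (3 ≤ G.degree D ·)
  omega

lemma two_le_sum_degree_sdiff (hD : D.Finite) (hS : ∀ v, v ∈ S ↔ v ∈ G.verts D)
    (hconn : G.Preconnected D) (hdeg : G.MinDegreeGeTwo D) (hCD : C ⊆ D) (hC : G.MinDegreeGeTwo C)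
    (hCne : C.Nonempty) (hDC : (D \ C).Nonempty) :
    2 ≤ ∑ v ∈ S with 3 ≤ G.degree D v, G.degree (D \ C) v := by
  have hsplit (v) : G.degree D v = G.degree (D \ C) v + G.degree C v := by
    conv_lhs => rw [← sdiff_union_of_subset hCD]
    exact degree_union hD.sdiff (hD.subset hCD) disjoint_sdiff_left v
  obtain ⟨x, hx, hxC⟩ :=
    (sdiff_union_of_subset hCD ▸ hconn).exists_mem_verts_inter hDC hCne
  have hx₁ := (degree_pos_iff hD.sdiff).2 hx
  have hxB : x ∈ {v ∈ S | 3 ≤ G.degree D v} := by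
    refine Finset.mem_filter.2 ⟨(hS x).2 (verts_mono sdiff_subset hx), ?_⟩
    have := hC x hxC
    rw [hsplit]
    omega
  have hpos := (Finset.single_le_sum (fun _ _ => Nat.zero_le _) hxB).trans' hx₁
  -- outside the vertices of degree ≥ 3, `G[D \ C]` has only even degrees
  have heven : Even (∑ v ∈ S with 3 ≤ G.degree D v, G.degree (D \ C) v) := by
    have htot := sum_degree_eq_two_mul_ncard (hD.sdiff (t := C)) fun v hv =>
      (hS v).2 (verts_mono sdiff_subset hv)
    rw [← Finset.sum_filter_add_sum_filter_not S (3 ≤ G.degree D ·)] at htot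
    refine (Nat.even_add.1 (htot ▸ even_two_mul _)).2 (Finset.even_sum _ fun v hv => ?_)
    obtain ⟨hvS, hv3⟩ := Finset.mem_filter.1 hv
    have h2 := hdeg v ((hS v).1 hvS)
    have : G.degree (D \ C) v = 0 ∨ G.degree (D \ C) v = 2 := by
      rcases (G.degree C v).eq_zero_or_pos with h0 | h0
      · have := hsplit v; omega
      · have := hC v ((degree_pos_iff (hD.subset hCD)).1 h0); have := hsplit v; omega
    rcases this with h | h <;> simp [h]
  obtain ⟨k, hk⟩ := heven
  omega

lemma sum_degree_sdiff_le (hD : D.Finite) (𝒯 : Finset (Set E))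
    (h𝒯 : (𝒯 : Set (Set E)).Pairwise fun C C' => Disjoint (D \ C) (D \ C')) (v : V) :
    ∑ C ∈ 𝒯, G.degree (D \ C) v ≤ G.degree D v := by
  classical
  rw [Finset.sum_congr rfl fun C _ => degree_eq_sum (hD.sdiff (t := C)) v, degree_eq_sum hD v,
    ← Finset.sum_biUnion fun C hC C' hC' hne => Set.Finite.disjoint_toFinset.2 (h𝒯 hC hC' hne)]
  exact Finset.sum_le_sum_of_subset (Finset.biUnion_subset.2 fun C _ e he =>
    hD.mem_toFinset.2 (Set.Finite.mem_toFinset _ |>.1 he).1)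

end Counting

theorem card_le_six_of_pairwise_disjoint_sdiff {D : Set E} (hD : D.Finite)
    (hconn : G.Preconnected D) (hdeg : G.MinDegreeGeTwo D)
    (hcard : D.ncard ≤ (G.verts D).ncard + 2) (𝒯 : Finset (Set E))
    (h𝒯 : ∀ C ∈ 𝒯, C ⊆ D ∧ C.Nonempty ∧ (D \ C).Nonempty ∧ G.MinDegreeGeTwo C)
    (hdisj : (𝒯 : Set (Set E)).Pairwise fun C C' => Disjoint (D \ C) (D \ C')) : 𝒯.card ≤ 6 := by
  classical
  set S := (verts_finite (G := G) hD).toFinset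
  have hS (v) : v ∈ S ↔ v ∈ G.verts D := Set.Finite.mem_toFinset _
  have hlow : 𝒯.card * 2 ≤ ∑ C ∈ 𝒯, ∑ v ∈ S with 3 ≤ G.degree D v, G.degree (D \ C) v := by
    rw [← smul_eq_mul]
    exact Finset.card_nsmul_le_sum _ _ _ fun C hC =>
      let ⟨hCD, hCne, hDC, hC⟩ := h𝒯 C hC
      two_le_sum_degree_sdiff hD hS hconn hdeg hCD hC hCne hDC
  have hhigh : ∑ C ∈ 𝒯, ∑ v ∈ S with 3 ≤ G.degree D v, G.degree (D \ C) v ≤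
      ∑ v ∈ S with 3 ≤ G.degree D v, G.degree D v := by
    rw [Finset.sum_comm]
    exact Finset.sum_le_sum fun v _ => sum_degree_sdiff_le hD 𝒯 hdisj v
  have hsum := sum_degree_filter_add_le hD hS hdeg
  have hSV : S.card = (G.verts D).ncard := (ncard_eq_toFinset_card _ _).symm
  omega

end Multigraph

/-! ### Double circuits -/

section Matroid

variable {M : Matroid α} {C C' D : Set α}

lemma eRk_eq_eRk (M : Matroid α) (X : Set α) : eRk M X = M.eRk X := by
  refine le_antisymm (iSup₂_le fun I hI => hI.1.encard_le_eRk_of_subset hI.2) ?_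
  obtain ⟨I, hI⟩ := M.exists_isBasis' X
  rw [← hI.encard_eq_eRk]
  exact le_iSup₂ (f := fun I (_ : I ∈ {I | M.Indep I ∧ I ⊆ X}) => I.encard) I
    ⟨hI.indep, hI.subset⟩

lemma circuit_iff_isCircuit : Circuit M C ↔ M.IsCircuit C := by
  rw [Matroid.isCircuit_iff_forall_ssubset]
  exact and_congr_right fun hC => forall₂_congr fun _ hD =>
    Matroid.not_dep_iff (hD.subset.trans hC.subset_ground)

/-- Deleting an element `x` outside `C ∪ C'` leaves a set of nullity one, which contains only one
circuit. -/
lemma DoubleCircuit.union_eq (hD : DoubleCircuit M D) (hC : M.IsCircuit C)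
    (hC' : M.IsCircuit C') (hCD : C ⊆ D) (hC'D : C' ⊆ D) (hne : C ≠ C') : C ∪ C' = D := by
  obtain ⟨-, hDfin, hrk, hdel⟩ := hD
  by_contra hCC'
  obtain ⟨x, hxD, hx⟩ := exists_of_ssubset ((union_subset hCD hC'D).ssubset_of_ne hCC')
  obtain ⟨I, hI⟩ := M.exists_isBasis' (D \ {x})
  have hIfin : I.Finite := hDfin.subset (hI.subset.trans sdiff_subset)
  have hIrk : (I.ncard : ℕ∞) + 2 = D.ncard := by
    rw [hIfin.cast_ncard_eq, hI.encard_eq_eRk, ← eRk_eq_eRk, hdel x hxD, hrk,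
      hDfin.cast_ncard_eq]
  obtain ⟨y, hy⟩ : ∃ y, (D \ {x}) \ I = {y} := by
    rw [← ncard_eq_one]
    have h₁ := ncard_sdiff_add_ncard_of_subset hI.subset hDfin.sdiff
    have h₂ := ncard_sdiff_singleton_add_one hxD hDfin
    norm_cast at hIrk
    omega
  have hsub : ∀ C'', C'' ⊆ D → x ∉ C'' → C'' ⊆ insert y I := fun C'' hC''D hxC'' z hz => by
    by_cases hzI : z ∈ I
    · exact mem_insert_of_mem _ hzI
    · have hz' : z ∈ (D \ {x}) \ I := ⟨⟨hC''D hz, fun h => hxC'' (h ▸ hz)⟩, hzI⟩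
      rw [hy] at hz'
      exact mem_insert_iff.2 (.inl hz')
  exact hne ((hC.eq_fundCircuit_of_subset hI.indep (hsub C hCD fun h => hx (.inl h))).trans
    (hC'.eq_fundCircuit_of_subset hI.indep (hsub C' hC'D fun h => hx (.inr h))).symm)

lemma sdiff_nonempty_of_isCircuit (hC : M.IsCircuit C) (hC' : M.IsCircuit C') (hC'D : C' ⊆ D)
    (hne : C ≠ C') : (D \ C).Nonempty :=
  Set.sdiff_nonempty.2 fun hDC => hne (hC'.eq_of_subset_isCircuit hC (hC'D.trans hDC)).symm

end Matroid

namespace Multigraph.IsBicircularOf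

variable {V E : Type*} {G : Multigraph V E} {M : Matroid E} {C D X : Set E}

lemma finite_preconnected_minDegreeGeTwo_of_isCircuit (hM : G.IsBicircularOf M)
    (hC : M.IsCircuit C) :
    C.Finite ∧ G.Preconnected C ∧ G.MinDegreeGeTwo C := by
  obtain ⟨Y, hYC, hY, hdep, hconn, hdeg⟩ :=
    exists_preconnected_minDegreeGeTwo_of_not_bicircIndep fun h => hC.not_indep ((hM.2 C).2 h)
  obtain rfl := hC.eq_of_not_indep_subset (fun h => hdep ((hM.2 Y).1 h)) hYC
  exact ⟨hY, hconn, hdeg⟩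

lemma eRk_le_encard_verts (hM : G.IsBicircularOf M) (hX : X.Finite) :
    M.eRk X ≤ (G.verts X).encard := by
  refine Matroid.eRk_le_iff.2 fun I hIX hI => ?_
  have hIfin := hX.subset hIX
  calc I.encard = I.ncard := hIfin.cast_ncard_eq.symm
    _ ≤ (G.verts I).ncard := by exact_mod_cast ((hM.2 I).1 hI).ncard_le_ncard_verts hIfin
    _ = (G.verts I).encard := (verts_finite hIfin).cast_ncard_eq
    _ ≤ (G.verts X).encard := encard_le_encard (verts_mono hIX)

lemma ncard_le_ncard_verts_add_two (hM : G.IsBicircularOf M) (hD : DoubleCircuit M D) :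
    D.ncard ≤ (G.verts D).ncard + 2 := by
  obtain ⟨-, hDfin, hrk, -⟩ := hD
  rw [eRk_eq_eRk] at hrk
  have h : D.encard ≤ (G.verts D).encard + 2 := hrk ▸ add_le_add_left
    (hM.eRk_le_encard_verts hDfin) 2
  rw [← hDfin.cast_ncard_eq, ← (verts_finite hDfin).cast_ncard_eq] at h
  exact_mod_cast h

theorem card_le_six_of_forall_isCircuit_subset (hM : G.IsBicircularOf M) (hD : DoubleCircuit M D)
    (𝒯 : Finset (Set E)) (h𝒯 : ∀ C ∈ 𝒯, M.IsCircuit C ∧ C ⊆ D) : 𝒯.card ≤ 6 := by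
  by_cases h3 : 𝒯.card ≤ 2
  · omega
  obtain ⟨C₁, h₁, C₂, h₂, C₃, h₃, h12, h13, h23⟩ := Finset.two_lt_card.1 (not_le.1 h3)
  have hunion (C) (hC : C ∈ 𝒯) (C') (hC' : C' ∈ 𝒯) (hne : C ≠ C') : C ∪ C' = D :=
    hD.union_eq (h𝒯 C hC).1 (h𝒯 C' hC').1 (h𝒯 C hC).2 (h𝒯 C' hC').2 hne
  have hsdiff (C) (hC : C ∈ 𝒯) : (D \ C).Nonempty := by
    by_cases hC₁ : C = C₁
    · exact sdiff_nonempty_of_isCircuit (h𝒯 C hC).1 (h𝒯 C₂ h₂).1 (h𝒯 C₂ h₂).2 (hC₁ ▸ h12)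
    · exact sdiff_nonempty_of_isCircuit (h𝒯 C hC).1 (h𝒯 C₁ h₁).1 (h𝒯 C₁ h₁).2 hC₁
  -- an element outside `C₃` lies in both `C₁` and `C₂`
  have hinter : (C₁ ∩ C₂).Nonempty := by
    obtain ⟨e, heD, heC₃⟩ := hsdiff C₃ h₃
    exact ⟨e, ((hunion C₃ h₃ C₁ h₁ h13.symm).symm ▸ heD).resolve_left heC₃,
      ((hunion C₃ h₃ C₂ h₂ h23.symm).symm ▸ heD).resolve_left heC₃⟩
  have hD12 := hunion C₁ h₁ C₂ h₂ h12
  have hcirc (C) (hC : C ∈ 𝒯) := hM.finite_preconnected_minDegreeGeTwo_of_isCircuit (h𝒯 C hC).1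
  obtain ⟨hC₁fin, hC₁conn, hC₁deg⟩ := hcirc C₁ h₁
  obtain ⟨hC₂fin, hC₂conn, hC₂deg⟩ := hcirc C₂ h₂
  refine card_le_six_of_pairwise_disjoint_sdiff hD.2.1 (hD12 ▸ hC₁conn.union hC₂conn hinter)
    (hD12 ▸ hC₁deg.union hC₂deg (hC₁fin.union hC₂fin)) (hM.ncard_le_ncard_verts_add_two hD) 𝒯
    (fun C hC => ⟨(h𝒯 C hC).2, (h𝒯 C hC).1.nonempty, hsdiff C hC, (hcirc C hC).2.2⟩)
    fun C hC C' hC' hne => Set.disjoint_left.2 fun e ⟨heD, heC⟩ ⟨_, heC'⟩ =>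
      (hunion C hC C' hC' hne ▸ heD).elim heC heC'

end Multigraph.IsBicircularOf

/-- Every double circuit in a bicircular matroid has degree at most `6`,
i.e. contains at most `6` circuits. -/
theorem bicircular_doubleCircuit_degree_le_six {V E : Type*} (G : Multigraph V E)
    (M : Matroid E) (hM : Multigraph.IsBicircularOf G M) (D : Set E)
    (hD : DoubleCircuit M D) :
    {C : Set E | Circuit M C ∧ C ⊆ D}.encard ≤ 6 := by
  simp_rw [circuit_iff_isCircuit]
  have hfin : {C | M.IsCircuit C ∧ C ⊆ D}.Finite :=
    hD.2.1.finite_subsets.subset fun C hC => hC.2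
  rw [show (6 : ℕ∞) = ((6 : ℕ) : ℕ∞) from rfl, encard_le_coe_iff_finite_ncard_le,
    ncard_eq_toFinset_card _ hfin]
  exact ⟨hfin, hM.card_le_six_of_forall_isCircuit_subset hD _ fun C hC => hfin.mem_toFinset.1 hC⟩

end Paper
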